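/- arXiv:1605.03411 — 3 statements merged into one kernel-verified Lean document; each statement's English description precedes it below -/
import Mathlib

section
/- Let Λ be a lattice in an LCA group G and Ω a measurable set with finite positive measure. If (Ω, Λ) is a sub-tiling pair, then there exists a measurable cross section Q of G/Λ such that Ω ⊆ Q up to a null set; i.e., every sub-tiling set is contained (modulo null sets) in a tiling set. -/
open MeasureTheory

/-- `Q` is a measurable cross section (fundamental domain of representatives) for the
cosets of the subgroup `Λ` in `G`: `Q` is measurable and meets each coset of `Λ`
in exactly one point. -/
def IsCrossSection {G : Type*} [CommGroup G] [MeasurableSpace G]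
    (Λ : Subgroup G) (Q : Set G) : Prop :=
  MeasurableSet Q ∧ ∀ g : G, ∃! q, q ∈ Q ∧ g * q⁻¹ ∈ Λ

/-!
Discard from `Ω` the null set of points having a nontrivial `Λ`-translate in `Ω`; what is left
meets every coset of `Λ` at most once. Since `Λ` is discrete, `G → G ⧸ Λ` is a covering map, so
`G` is covered by countably many open sets on each of which it is injective. List the trimmed
set first and these open sets after it, and keep from the `n`-th set only the points whose coset
is not met by an earlier set: the result is a measurable cross section containing the trimmed set.
-/

open Set

section Transversal

variable {α β : Type*} (π : α → β) (W : ℕ → Set α)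

def disjointedTransversal : Set α :=
  ⋃ n, W n ∩ π ⁻¹' disjointed (fun n ↦ π '' W n) n

variable {π W}

theorem injOn_disjointedTransversal (hW : ∀ n, InjOn π (W n)) :
    InjOn π (disjointedTransversal π W) := by
  simp only [disjointedTransversal, InjOn, mem_iUnion]
  rintro x ⟨m, hxW, hxD⟩ y ⟨n, hyW, hyD⟩ hxy
  rw [mem_preimage] at hxD hyD
  obtain rfl : m = n := by
    by_contra hmn
    exact disjoint_left.mp (disjoint_disjointed _ hmn) hxD (hxy ▸ hyD)
  exact hW m hxW hyW hxy

theorem image_disjointedTransversal :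
    π '' disjointedTransversal π W = ⋃ n, π '' W n := by
  refine Subset.antisymm ?_ fun b hb ↦ ?_
  · simp only [disjointedTransversal, image_iUnion]
    exact iUnion_mono fun n ↦ (image_mono inter_subset_left)
  · rw [← iUnion_disjointed, mem_iUnion] at hb
    obtain ⟨n, hn⟩ := hb
    obtain ⟨a, ha, rfl⟩ := disjointed_subset _ n hn
    exact ⟨a, mem_iUnion.mpr ⟨n, ha, hn⟩, rfl⟩

theorem subset_disjointedTransversal : W 0 ⊆ disjointedTransversal π W := fun a ha ↦
  mem_iUnion.mpr ⟨0, ha, by rw [mem_preimage, disjointed_zero]; exact mem_image_of_mem π ha⟩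

theorem MeasurableSet.disjointedTransversal [MeasurableSpace α] [MeasurableSpace β]
    (hπ : Measurable π) (hW : ∀ n, MeasurableSet (W n)) (hπW : ∀ n, MeasurableSet (π '' W n)) :
    MeasurableSet (disjointedTransversal π W) :=
  .iUnion fun n ↦ (hW n).inter (hπ (.disjointed hπW n))

end Transversal

theorem IsLocallyInjective.exists_seq_isOpen_injOn_cover {X Y : Type*} [TopologicalSpace X]
    [SecondCountableTopology X] [Nonempty X] {f : X → Y} (hf : IsLocallyInjective f) :
    ∃ W : ℕ → Set X, (∀ n, IsOpen (W n)) ∧ (∀ n, InjOn f (W n)) ∧ ⋃ n, W n = univ := by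
  choose U hUo hxU hUinj using hf
  obtain ⟨s, hsc, hsU⟩ := TopologicalSpace.countable_cover_nhds fun x ↦ (hUo x).mem_nhds (hxU x)
  have hs : s.Nonempty := by
    by_contra! h
    rw [h, biUnion_empty] at hsU
    exact empty_ne_univ hsU
  obtain ⟨e, rfl⟩ := hsc.exists_eq_range hs
  exact ⟨U ∘ e, fun n ↦ hUo _, fun n ↦ hUinj _, by simpa [iUnion_range_eq_iUnion] using hsU⟩

namespace QuotientGroup

variable {G : Type*} [Group G] (Λ : Subgroup G)

theorem isLocallyInjective_mk [TopologicalSpace G] [IsTopologicalGroup G] [DiscreteTopology Λ] :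
    IsLocallyInjective (mk : G → G ⧸ Λ) :=
  (Λ.isQuotientCoveringMap (SetLike.isDiscrete_iff_discreteTopology.mpr ‹_›)).isCoveringMap
    |>.isLocalHomeomorph.isLocallyInjective

theorem measurableSet_image_mk [MeasurableSpace G] [MeasurableMul G] [Countable Λ] {s : Set G}
    (hs : MeasurableSet s) : MeasurableSet ((mk : G → G ⧸ Λ) '' s) := by
  rw [measurableSet_quotient]
  change MeasurableSet (mk ⁻¹' ((mk : G → G ⧸ Λ) '' s))
  rw [preimage_image_mk]
  exact .iUnion fun l ↦ hs.preimage (measurable_mul_const _)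

end QuotientGroup

theorem isCrossSection_iff {G : Type*} [CommGroup G] [MeasurableSpace G] (Λ : Subgroup G)
    (Q : Set G) :
    IsCrossSection Λ Q ↔ MeasurableSet Q ∧ BijOn (QuotientGroup.mk : G → G ⧸ Λ) Q univ := by
  have mem_iff : ∀ g q : G, g * q⁻¹ ∈ Λ ↔ (q : G ⧸ Λ) = g := fun g q ↦ by
    rw [QuotientGroup.eq, mul_comm]
  simp only [IsCrossSection, mem_iff]
  refine and_congr_right fun _ ↦ ⟨fun h ↦ ⟨mapsTo_univ _ _, fun a ha b hb hab ↦ ?_, ?_⟩, ?_⟩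
  · exact (h b).unique ⟨ha, hab⟩ ⟨hb, rfl⟩
  · rintro y -
    induction y using QuotientGroup.induction_on with | H g => ?_
    obtain ⟨q, ⟨hq, hqg⟩, -⟩ := h g
    exact ⟨q, hq, hqg⟩
  · rintro ⟨-, hinj, hsurj⟩ g
    obtain ⟨q, hq, hqg⟩ := hsurj (mem_univ (g : G ⧸ Λ))
    exact ⟨q, ⟨hq, hqg⟩, fun q' ⟨hq', hq'g⟩ ↦ hinj hq' hq (hq'g.trans hqg.symm)⟩

section CrossSection

variable {G : Type*} [CommGroup G] [TopologicalSpace G] [IsTopologicalGroup G]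
  [SecondCountableTopology G] [MeasurableSpace G] [BorelSpace G]
  (Λ : Subgroup G) [DiscreteTopology Λ] [Countable Λ]

theorem exists_isCrossSection_superset {S : Set G} (hS : MeasurableSet S)
    (hSinj : InjOn (QuotientGroup.mk : G → G ⧸ Λ) S) : ∃ Q, IsCrossSection Λ Q ∧ S ⊆ Q := by
  obtain ⟨W, hWo, hWinj, hWcover⟩ :=
    (QuotientGroup.isLocallyInjective_mk Λ).exists_seq_isOpen_injOn_cover
  let π : G → G ⧸ Λ := QuotientGroup.mk
  let V : ℕ → Set G := fun | 0 => S | n + 1 => W n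
  have hVmeas : ∀ n, MeasurableSet (V n) := fun | 0 => hS | n + 1 => (hWo n).measurableSet
  have hVinj : ∀ n, InjOn π (V n) := fun | 0 => hSinj | n + 1 => hWinj n
  have hQmeas : MeasurableSet (disjointedTransversal π V) :=
    .disjointedTransversal measurable_quotient_mk'' hVmeas
      fun n ↦ QuotientGroup.measurableSet_image_mk Λ (hVmeas n)
  have hQsurj : SurjOn π (disjointedTransversal π V) univ := by
    rintro y -
    obtain ⟨g, rfl⟩ := QuotientGroup.mk_surjective y
    obtain ⟨n, hgn⟩ := mem_iUnion.mp (hWcover.symm ▸ mem_univ g)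
    rw [image_disjointedTransversal]
    exact mem_iUnion.mpr ⟨n + 1, mem_image_of_mem _ hgn⟩
  exact ⟨_, (isCrossSection_iff Λ _).mpr
    ⟨hQmeas, mapsTo_univ _ _, injOn_disjointedTransversal hVinj, hQsurj⟩,
    subset_disjointedTransversal (W := V)⟩

end CrossSection

section Overlap

variable {G : Type*} [Group G] (Λ : Subgroup G) (Ω : Set G)

def translateOverlap : Set G :=
  ⋃ l : Λ, ⋃ (_ : (l : G) ≠ 1), Ω ∩ (· * (l : G)) '' Ω

theorem injOn_mk_diff_translateOverlap :
    InjOn (QuotientGroup.mk : G → G ⧸ Λ) (Ω \ translateOverlap Λ Ω) := by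
  rintro x ⟨hx, -⟩ y ⟨hy, hyO⟩ hxy
  by_contra hne
  refine hyO (mem_iUnion₂.mpr ⟨⟨x⁻¹ * y, QuotientGroup.eq.mp hxy⟩, ?_, hy, x, hx, ?_⟩)
  · simpa [inv_mul_eq_one] using hne
  · simp

variable {Λ Ω}

theorem measurableSet_translateOverlap [MeasurableSpace G] [MeasurableMul G] [Countable Λ]
    (hΩ : MeasurableSet Ω) : MeasurableSet (translateOverlap Λ Ω) :=
  .iUnion fun l ↦ .iUnion fun _ ↦ hΩ.inter (by
    rw [image_mul_right]; exact hΩ.preimage (measurable_mul_const _))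

theorem measure_translateOverlap_eq_zero [MeasurableSpace G] [Countable Λ] {μ : Measure G}
    (h : ∀ l ∈ Λ, l ≠ 1 → μ (Ω ∩ (· * l) '' Ω) = 0) : μ (translateOverlap Λ Ω) = 0 :=
  measure_iUnion_null fun l ↦ measure_iUnion_null fun hl ↦ h l l.2 hl

end Overlap

theorem subtiling_subset_cross_section_general
    {G : Type*} [CommGroup G] [TopologicalSpace G] [IsTopologicalGroup G]
    [SecondCountableTopology G]
    [MeasurableSpace G] [BorelSpace G]
    (μ : Measure G)
    (Λ : Subgroup G) [DiscreteTopology Λ] [Countable Λ]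
    (Ω : Set G) (hΩmeas : MeasurableSet Ω)
    (hsub : ∀ l ∈ Λ, l ≠ 1 → μ (Ω ∩ ((· * l) '' Ω)) = 0) :
    ∃ Q : Set G, IsCrossSection Λ Q ∧ μ (Ω \ Q) = 0 := by
  obtain ⟨Q, hQ, hΩQ⟩ := exists_isCrossSection_superset Λ
    (hΩmeas.diff (measurableSet_translateOverlap hΩmeas)) (injOn_mk_diff_translateOverlap Λ Ω)
  exact ⟨Q, hQ,
    measure_mono_null (sdiff_subset_comm.mp hΩQ) (measure_translateOverlap_eq_zero hsub)⟩

/-- If `(Ω, Λ)` is a sub-tiling pair (a.e. disjoint `Λ`-translates),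
then `Ω` is contained, modulo a `μ`-null set, in some measurable cross section of
`G/Λ`; i.e. every sub-tiling set is contained (mod null sets) in a tiling set. -/
theorem subtiling_subset_cross_section
    {G : Type*} [CommGroup G] [TopologicalSpace G] [IsTopologicalGroup G]
    [T2Space G] [LocallyCompactSpace G] [SecondCountableTopology G]
    [MeasurableSpace G] [BorelSpace G]
    (μ : Measure G) [μ.IsHaarMeasure]
    (Λ : Subgroup G) [DiscreteTopology Λ] [CompactSpace (G ⧸ Λ)] [Countable Λ]
    (Ω : Set G) (hΩmeas : MeasurableSet Ω) (hΩpos : 0 < μ Ω) (hΩfin : μ Ω < ⊤)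
    (hsub : ∀ l ∈ Λ, l ≠ 1 → μ (Ω ∩ ((· * l) '' Ω)) = 0) :
    ∃ Q : Set G, IsCrossSection Λ Q ∧ μ (Ω \ Q) = 0 :=
  subtiling_subset_cross_section_general μ Λ Ω hΩmeas hsub
end

section
/- Let G be a countable discrete abelian group, π a dual integrable unitary representation of G on a Hilbert space H with bracket map [·,·]_π, and φ ∈ H. Then the orbit {π(g)φ : g ∈ G} is an orthonormal system in H if and only if [φ, φ]_π(χ) = 1 for almost every χ ∈ Ĝ. -/
open MeasureTheory Filter Topology
open scoped ComplexConjugate InnerProductSpace ENNReal BoundedContinuousFunction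

/-!
By unitarity `⟪π g φ, π h φ⟫ = ⟪π (h⁻¹ g) φ, φ⟫`, so the orbit is orthonormal iff
`⟪π g φ, φ⟫ = δ_{g,1}` for all `g`. By dual integrability the left side is the `g`-th Fourier
coefficient of `[φ, φ]_π`, and by orthogonality of characters `δ_{g,1}` is that of the constant `1`.
Two integrable functions on the compact group `Ĝ` with the same Fourier coefficients agree a.e.:
the characters span a dense subspace of `C(Ĝ, ℂ)` (Stone–Weierstrass), and bounded continuous
functions approximate indicators of closed sets in `L¹` (regularity of the Haar measure).
-/

theorem orthonormal_orbit_iff {𝕜 G E : Type*} [RCLike 𝕜] [Group G] [DecidableEq G]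
    [NormedAddCommGroup E] [InnerProductSpace 𝕜 E] (π : G →* (E ≃ₗᵢ[𝕜] E)) (φ : E) :
    Orthonormal 𝕜 (fun g => π g φ) ↔ ∀ g, ⟪π g φ, φ⟫_𝕜 = if g = 1 then 1 else 0 := by
  have inner_orbit (g h : G) : ⟪π g φ, π h φ⟫_𝕜 = ⟪π (h⁻¹ * g) φ, φ⟫_𝕜 := by
    rw [← (π h⁻¹).inner_map_map]
    simp
  rw [orthonormal_iff_ite]
  refine ⟨fun H g => by simpa using H g 1, fun H g h => ?_⟩
  simp only [inner_orbit, H, inv_mul_eq_one, eq_comm]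

theorem MeasureTheory.ae_eq_zero_of_forall_integral_smul_eq_zero
    {X E : Type*} [TopologicalSpace X] [NormalSpace X] [MeasurableSpace X] [BorelSpace X]
    [NormedAddCommGroup E] [NormedSpace ℝ E] [CompleteSpace E]
    {μ : Measure X} [IsFiniteMeasure μ] [μ.OuterRegular]
    {h : X → E} (hh : Integrable h μ) (H : ∀ u : X →ᵇ ℝ, ∫ x, u x • h x ∂μ = 0) :
    h =ᵐ[μ] 0 := by
  refine ae_eq_zero_of_forall_setIntegral_isClosed_eq_zero hh fun s hs => ?_
  have hs_meas : MeasurableSet s := hs.measurableSet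
  have approx : ∀ n : ℕ, ∃ u : X →ᵇ ℝ,
      eLpNorm (⇑u - s.indicator 1) 1 μ ≤ (n : ℝ≥0∞)⁻¹ ∧ ∀ x, ‖u x‖ ≤ 1 := by
    intro n
    obtain ⟨u, hu_cont, hu_approx, hu_bound, -, -⟩ :=
      exists_continuous_eLpNorm_sub_le_of_closed (μ := μ) ENNReal.one_ne_top hs isOpen_univ
        s.subset_univ (measure_ne_top μ s) (1 : ℝ)
        (ENNReal.inv_ne_zero.mpr (ENNReal.natCast_ne_top n))
    have hu_bound' : ∀ x, ‖u x‖ ≤ 1 := by simpa using hu_bound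
    exact ⟨.ofNormedAddCommGroup u hu_cont 1 hu_bound', hu_approx, hu_bound'⟩
  choose u hu_approx hu_bound using approx
  have hu_tendsto : TendstoInMeasure μ (fun n => ⇑(u n)) atTop (s.indicator 1) :=
    tendstoInMeasure_of_tendsto_eLpNorm one_ne_zero (fun n => (u n).continuous.aestronglyMeasurable)
      (aestronglyMeasurable_const.indicator hs_meas) <|
      tendsto_of_tendsto_of_tendsto_of_le_of_le tendsto_const_nhds
        ENNReal.tendsto_inv_nat_nhds_zero (fun _ => zero_le) hu_approx
  obtain ⟨ns, -, hu_ae⟩ := hu_tendsto.exists_seq_tendsto_ae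
  have hlim : Tendsto (fun i => ∫ x, u (ns i) x • h x ∂μ) atTop (𝓝 (∫ x in s, h x ∂μ)) := by
    rw [← integral_indicator hs_meas]
    refine tendsto_integral_of_dominated_convergence (fun x => ‖h x‖)
      (fun i => (u (ns i)).continuous.aestronglyMeasurable.smul hh.aestronglyMeasurable) hh.norm
      (fun i => Eventually.of_forall fun x => ?_) ?_
    · rw [norm_smul]
      exact mul_le_of_le_one_left (norm_nonneg _) (hu_bound _ x)
    · filter_upwards [hu_ae] with x hx
      simpa [← Set.indicator_smul_apply_left] using hx.smul_const (h x)
  simp only [H] at hlim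
  exact (tendsto_const_nhds_iff.mp hlim).symm

theorem MeasureTheory.Integrable.continuousMap_mul {X : Type*} [TopologicalSpace X] [CompactSpace X]
    [MeasurableSpace X] [OpensMeasurableSpace X] {μ : Measure X} {f : X → ℂ}
    (hf : Integrable f μ) (u : C(X, ℂ)) : Integrable (fun x => u x * f x) μ :=
  hf.bdd_mul u.continuous.aestronglyMeasurable (Eventually.of_forall u.norm_coe_le_norm)

noncomputable def ContinuousMap.integralMulCLM {X : Type*} [TopologicalSpace X] [CompactSpace X]
    [MeasurableSpace X] [OpensMeasurableSpace X] {μ : Measure X} {f : X → ℂ}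
    (hf : Integrable f μ) : C(X, ℂ) →L[ℂ] ℂ :=
  LinearMap.mkContinuous
    { toFun := fun u => ∫ x, u x * f x ∂μ
      map_add' := fun u v => by
        simp only [ContinuousMap.add_apply, add_mul]
        exact integral_add (hf.continuousMap_mul u) (hf.continuousMap_mul v)
      map_smul' := fun c u => by
        simp only [ContinuousMap.smul_apply, smul_eq_mul, mul_assoc, integral_const_mul,
          RingHom.id_apply] }
    (∫ x, ‖f x‖ ∂μ) fun u => by
      calc ‖∫ x, u x * f x ∂μ‖ ≤ ∫ x, ‖u‖ * ‖f x‖ ∂μ :=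
            norm_integral_le_of_norm_le (hf.norm.const_mul _) <| Eventually.of_forall fun x => by
              rw [norm_mul]
              exact mul_le_mul_of_nonneg_right (u.norm_coe_le_norm x) (norm_nonneg _)
        _ = (∫ x, ‖f x‖ ∂μ) * ‖u‖ := by rw [integral_const_mul, mul_comm]

theorem MeasureTheory.Measure.compactSpace_of_isHaarMeasure {G : Type*} [Group G]
    [TopologicalSpace G] [IsTopologicalGroup G] [WeaklyLocallyCompactSpace G] [MeasurableSpace G]
    [BorelSpace G] (μ : Measure G) [μ.IsHaarMeasure] [IsFiniteMeasure μ] : CompactSpace G := by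
  by_contra hG
  rw [not_compactSpace_iff] at hG
  exact measure_ne_top μ _ (measure_univ_of_isMulLeftInvariant μ)

namespace AddCircle

noncomputable def ratCastHom : AddCircle (1 : ℚ) →+ AddCircle (1 : ℝ) :=
  QuotientAddGroup.map _ _ (Rat.castHom ℝ).toAddMonoidHom <| by
    rintro _ ⟨k, rfl⟩
    exact ⟨k, by simp⟩

theorem ratCastHom_injective : Function.Injective ratCastHom := by
  rw [injective_iff_map_eq_zero]
  intro q hq
  induction q using QuotientAddGroup.induction_on with
  | H q =>
    obtain ⟨k, hk⟩ := (coe_eq_zero_iff 1).mp hq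
    exact (coe_eq_zero_iff 1).mpr ⟨k, Rat.cast_injective (α := ℝ) (by simpa using hk)⟩

end AddCircle

namespace PontryaginDual

variable {G : Type*} [CommGroup G] [TopologicalSpace G]

-- `ℚ/ℤ` is an injective `ℤ`-module, so `g` is detected by some `ℚ/ℤ`-valued character of `G`.
theorem exists_apply_ne_one [DiscreteTopology G] {g : G} (hg : g ≠ 1) :
    ∃ χ : PontryaginDual G, χ g ≠ 1 := by
  obtain ⟨c, hc⟩ := CharacterModule.exists_character_apply_ne_zero_of_ne_zero
    (a := Additive.ofMul g) (by simpa using hg)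
  let χ : PontryaginDual G :=
    { toFun := fun x => AddCircle.toCircle (AddCircle.ratCastHom (c (Additive.ofMul x)))
      map_one' := by simp
      map_mul' := fun x y => by simp [AddCircle.toCircle_add]
      continuous_toFun := continuous_of_discreteTopology }
  refine ⟨χ, fun hχ => hc (AddCircle.ratCastHom_injective ?_)⟩
  rw [map_zero]
  exact AddCircle.injective_toCircle one_ne_zero (hχ.trans AddCircle.toCircle_zero.symm)

noncomputable def fourier : G →* C(PontryaginDual G, ℂ) where
  toFun g := ⟨fun χ => χ g, continuous_subtype_val.comp
    (ContinuousEvalConst.continuous_eval_const (F := ContinuousMonoidHom G Circle) g)⟩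
  map_one' := by ext; simp
  map_mul' _ _ := by ext; simp

@[simp]
theorem fourier_apply (g : G) (χ : PontryaginDual G) : fourier g χ = χ g := rfl

theorem star_fourier (g : G) : star (fourier g) = fourier g⁻¹ := by
  ext χ
  simp only [ContinuousMap.star_apply, fourier_apply, map_inv, Circle.coe_inv_eq_conj,
    RCLike.star_def]

theorem dense_span_fourier [CompactSpace (PontryaginDual G)] :
    Dense (Submodule.span ℂ (Set.range (fourier (G := G))) : Set C(PontryaginDual G, ℂ)) := by
  have hspan :
      Subalgebra.toSubmodule (StarAlgebra.adjoin ℂ (Set.range (fourier (G := G)))).toSubalgebra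
        = Submodule.span ℂ (Set.range fourier) := by
    have hstar : star (Set.range (fourier (G := G))) = Set.range fourier := by
      ext u
      simp only [Set.mem_star, Set.mem_range]
      constructor
      · rintro ⟨g, hg⟩
        exact ⟨g⁻¹, by rw [← star_fourier, hg, star_star]⟩
      · rintro ⟨g, rfl⟩
        exact ⟨g⁻¹, by rw [← star_fourier]⟩
    rw [StarAlgebra.adjoin_eq_span, hstar, Set.union_self, ← MonoidHom.coe_mrange,
      Submonoid.closure_eq]
  have hsep : (StarAlgebra.adjoin ℂ (Set.range (fourier (G := G)))).SeparatesPoints := by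
    intro χ₁ χ₂ hne
    obtain ⟨g, hg⟩ : ∃ g, χ₁ g ≠ χ₂ g := by
      by_contra! h
      exact hne (PontryaginDual.ext h)
    exact ⟨_, ⟨fourier g, StarAlgebra.subset_adjoin ℂ _ ⟨g, rfl⟩, rfl⟩,
      fun h => hg (Circle.coe_injective h)⟩
  rw [Submodule.dense_iff_topologicalClosure_eq_top, ← hspan]
  exact congr_arg (Subalgebra.toSubmodule <| StarSubalgebra.toSubalgebra ·)
    (ContinuousMap.starSubalgebra_topologicalClosure_eq_top_of_separatesPoints _ hsep)

variable [MeasurableSpace (PontryaginDual G)] [BorelSpace (PontryaginDual G)]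
  (ν : Measure (PontryaginDual G))

theorem ae_eq_zero_of_forall_integral_mul_conj_eq_zero [CompactSpace (PontryaginDual G)]
    [IsFiniteMeasure ν] [ν.OuterRegular] {f : PontryaginDual G → ℂ} (hf : Integrable f ν)
    (H : ∀ g : G, ∫ χ, f χ * conj (χ g : ℂ) ∂ν = 0) : f =ᵐ[ν] 0 := by
  have hT : ContinuousMap.integralMulCLM hf = 0 := by
    refine ContinuousLinearMap.ext_on dense_span_fourier ?_
    rintro _ ⟨g, rfl⟩
    have hg := H g⁻¹
    simp only [map_inv, Circle.coe_inv_eq_conj, Complex.conj_conj] at hg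
    simpa [ContinuousMap.integralMulCLM, mul_comm] using hg
  refine ae_eq_zero_of_forall_integral_smul_eq_zero hf fun u => ?_
  have := congr($hT ⟨fun x => (u x : ℂ), by fun_prop⟩)
  simpa [ContinuousMap.integralMulCLM, Complex.real_smul] using this

variable [DiscreteTopology G]

theorem integral_apply [DecidableEq G] [ν.IsMulLeftInvariant] [IsProbabilityMeasure ν] (g : G) :
    ∫ χ, (χ g : ℂ) ∂ν = if g = 1 then 1 else 0 := by
  split_ifs with hg
  · simp [hg]
  obtain ⟨χ₀, hχ₀⟩ := exists_apply_ne_one hg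
  have translate : (χ₀ g : ℂ) * ∫ χ, (χ g : ℂ) ∂ν = ∫ χ, (χ g : ℂ) ∂ν := by
    rw [← integral_const_mul]
    exact integral_mul_left_eq_self (fun χ : PontryaginDual G => (χ g : ℂ)) χ₀
  have hχ₀' : (χ₀ g : ℂ) ≠ 1 := fun h => hχ₀ (Circle.coe_injective h)
  exact (mul_left_eq_self₀.mp translate).resolve_left hχ₀'

theorem forall_integral_mul_conj_eq_ite_iff [DecidableEq G] [ν.IsHaarMeasure]
    [IsProbabilityMeasure ν]
    {f : PontryaginDual G → ℂ} (hf : Integrable f ν) :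
    (∀ g : G, ∫ χ, f χ * conj (χ g : ℂ) ∂ν = if g = 1 then 1 else 0) ↔ ∀ᵐ χ ∂ν, f χ = 1 := by
  have := ν.compactSpace_of_isHaarMeasure
  have one_coeff (g : G) : ∫ χ, conj (χ g : ℂ) ∂ν = if g = 1 then 1 else 0 := by
    rw [integral_conj, integral_apply]
    split_ifs <;> simp
  have integrable_conj (g : G) : Integrable (fun χ : PontryaginDual G => conj (χ g : ℂ)) ν :=
    (star (fourier g)).continuous.integrable_of_hasCompactSupport (.of_compactSpace _)
  constructor
  · intro hcoeff
    have hcoeff_sub (g : G) : ∫ χ, (f χ - 1) * conj (χ g : ℂ) ∂ν = 0 := by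
      simp_rw [sub_mul, one_mul]
      rw [integral_sub _ (integrable_conj g), hcoeff, one_coeff, sub_self]
      simpa [mul_comm] using hf.continuousMap_mul (star (fourier g))
    filter_upwards [ae_eq_zero_of_forall_integral_mul_conj_eq_zero ν
      (hf.sub (integrable_const 1)) hcoeff_sub] with χ hχ
    exact sub_eq_zero.mp hχ
  · intro hf_one g
    rw [← one_coeff]
    refine integral_congr_ae ?_
    filter_upwards [hf_one] with χ hχ
    rw [hχ, one_mul]

end PontryaginDual

theorem orbit_orthonormal_iff_bracket_ae_one_general
    {G : Type*} [CommGroup G] [TopologicalSpace G] [DiscreteTopology G]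
    {H : Type*} [NormedAddCommGroup H] [InnerProductSpace ℂ H]
    [MeasurableSpace (PontryaginDual G)] [BorelSpace (PontryaginDual G)]
    (ν : Measure (PontryaginDual G)) [ν.IsHaarMeasure] [IsProbabilityMeasure ν]
    (π : G →* (H ≃ₗᵢ[ℂ] H))
    (br : H → H → PontryaginDual G → ℂ)
    (hbr_int : ∀ x y : H, Integrable (br x y) ν)
    -- dual integrability: `⟨x, π(g) y⟩ = ∫_{Ĝ} [x,y]_π(χ) conj(χ(g)) dχ`
    -- (the inner product being linear in the first entry)
    (hbr : ∀ (g : G) (x y : H),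
      ⟪π g y, x⟫_ℂ = ∫ χ, br x y χ * conj ((χ g : ℂ)) ∂ν)
    (φ : H) :
    Orthonormal ℂ (fun g : G => π g φ) ↔ (∀ᵐ χ ∂ν, br φ φ χ = 1) := by
  classical
  simp_rw [orthonormal_orbit_iff, hbr _ φ φ]
  exact PontryaginDual.forall_integral_mul_conj_eq_ite_iff ν (hbr_int φ φ)

/-- Let `G` be a countable discrete abelian group, `π` a dual integrable
unitary representation of `G` on a Hilbert space `H` with bracket map `[·,·]_π` taking
values in `L¹(Ĝ)` (where the compact dual `Ĝ` carries normalized Haar measure `ν`), and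
`φ ∈ H`. Then the orbit `{π(g)φ : g ∈ G}` is orthonormal iff `[φ,φ]_π = 1` a.e. on `Ĝ`. -/
theorem orbit_orthonormal_iff_bracket_ae_one
    {G : Type*} [CommGroup G] [TopologicalSpace G] [DiscreteTopology G] [Countable G]
    {H : Type*} [NormedAddCommGroup H] [InnerProductSpace ℂ H] [CompleteSpace H]
    [MeasurableSpace (PontryaginDual G)] [BorelSpace (PontryaginDual G)]
    (ν : Measure (PontryaginDual G)) [ν.IsHaarMeasure] [IsProbabilityMeasure ν]
    (π : G →* (H ≃ₗᵢ[ℂ] H))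
    (br : H → H → PontryaginDual G → ℂ)
    (hbr_int : ∀ x y : H, Integrable (br x y) ν)
    -- dual integrability: `⟨x, π(g) y⟩ = ∫_{Ĝ} [x,y]_π(χ) conj(χ(g)) dχ`
    -- (the inner product being linear in the first entry)
    (hbr : ∀ (g : G) (x y : H),
      ⟪π g y, x⟫_ℂ = ∫ χ, br x y χ * conj ((χ g : ℂ)) ∂ν)
    (φ : H) :
    Orthonormal ℂ (fun g : G => π g φ) ↔ (∀ᵐ χ ∂ν, br φ φ χ = 1) :=
  orbit_orthonormal_iff_bracket_ae_one_general ν π br hbr_int hbr φ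
end

section
/- Let Λ be a lattice in an LCA group G and Ω a measurable set of finite positive measure that is not a sub-tiling set for Λ. Then there exists a nonzero f ∈ L²(Ω) with ⟨f, e_{λ̃}⟩_{L²(Ω)} = 0 for every λ̃ ∈ Λ⊥; consequently the exponential system {e_{λ̃} : λ̃ ∈ Λ⊥} is not a frame for L²(Ω). -/
/-!
Pick `l ∈ Λ`, `l ≠ 1`, such that `Ω` and its translate `Ω l` overlap in positive measure.
Since `G` is Hausdorff and second countable, the overlap contains a piece `Ω₁` of positive
measure disjoint from `Ω₂ = Ω₁ l⁻¹`, and both lie in `Ω`. Every character in `Λ⊥` is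
`l`-periodic, so by invariance of Haar measure it has the same integral over `Ω₁` and `Ω₂`.
Hence `f = 1_{Ω₁} - 1_{Ω₂}` is a nonzero function orthogonal to all exponentials
`e_{λ̃}`, `λ̃ ∈ Λ⊥`, which rules out a lower frame bound.
-/

open MeasureTheory
open scoped ComplexConjugate


open scoped Pointwise

/-- The annihilator (dual lattice) `Λ⊥` of a subgroup `Λ`: all continuous characters
of `G` that are trivial on `Λ`. -/
def dualLattice (G : Type*) [CommGroup G] [TopologicalSpace G] [IsTopologicalGroup G]
    (Λ : Subgroup G) : Subgroup (PontryaginDual G) where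
  carrier := {χ : PontryaginDual G | ∀ l ∈ Λ, χ l = 1}
  one_mem' := by intro l _; rfl
  mul_mem' := by
    intro χ ψ hχ hψ l hl
    show χ l * ψ l = 1
    rw [hχ l hl, hψ l hl, mul_one]
  inv_mem' := by
    intro χ hχ l hl
    show (χ l)⁻¹ = 1
    rw [hχ l hl, inv_one]

open Filter

theorem exists_subset_measure_ne_zero_disjoint_preimage {X : Type*} [TopologicalSpace X]
    [T2Space X] [SecondCountableTopology X] [MeasurableSpace X] [OpensMeasurableSpace X]
    (μ : Measure X) {S : Set X} (hS : MeasurableSet S) (hμS : μ S ≠ 0) {φ : X → X}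
    (hφ : Continuous φ) (hfix : ∀ x, φ x ≠ x) :
    ∃ A ⊆ S, MeasurableSet A ∧ μ A ≠ 0 ∧ Disjoint A (φ ⁻¹' A) := by
  obtain ⟨x, hxS, hpos⟩ := exists_mem_forall_mem_nhdsWithin_pos_measure hμS
  obtain ⟨V, W, hV, hW, hxV, hφxW, hVW⟩ := t2_separation (hfix x).symm
  -- `φ` maps `V ∩ φ⁻¹' W` into `W`, which misses `V`
  have hU : IsOpen (V ∩ φ ⁻¹' W) := hV.inter (hW.preimage hφ)
  refine ⟨S ∩ (V ∩ φ ⁻¹' W), Set.inter_subset_left, hS.inter hU.measurableSet,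
    (hpos _ (inter_mem_nhdsWithin S (hU.mem_nhds ⟨hxV, hφxW⟩))).ne', ?_⟩
  rw [Set.disjoint_left]
  rintro y ⟨-, -, hφyW⟩ ⟨-, hφyV, -⟩
  exact Set.disjoint_left.1 hVW hφyV hφyW

theorem exists_subset_disjoint_preimage_mul_right_of_overlap {G : Type*} [Group G]
    [TopologicalSpace G] [ContinuousMul G] [T2Space G] [SecondCountableTopology G]
    [MeasurableSpace G] [BorelSpace G] (μ : Measure G) {Ω : Set G}
    (hΩ : MeasurableSet Ω) {l : G} (hl : l ≠ 1) (hoverlap : μ (Ω ∩ (· * l) '' Ω) ≠ 0) :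
    ∃ Ω₁ ⊆ Ω, MeasurableSet Ω₁ ∧ μ Ω₁ ≠ 0 ∧ Disjoint Ω₁ ((· * l) ⁻¹' Ω₁) ∧
      (· * l) ⁻¹' Ω₁ ⊆ Ω := by
  have hΩl : MeasurableSet ((· * l) '' Ω) := by
    rw [Set.image_mul_right]
    exact hΩ.preimage (continuous_mul_const _).measurable
  obtain ⟨Ω₁, hΩ₁S, hΩ₁, hμΩ₁, hdisj⟩ := exists_subset_measure_ne_zero_disjoint_preimage μ
    (hΩ.inter hΩl) hoverlap (continuous_mul_const l) (fun x => by simpa using hl)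
  refine ⟨Ω₁, hΩ₁S.trans Set.inter_subset_left, hΩ₁, hμΩ₁, hdisj, ?_⟩
  calc (· * l) ⁻¹' Ω₁ ⊆ (· * l) ⁻¹' ((· * l) '' Ω) :=
        Set.preimage_mono (hΩ₁S.trans Set.inter_subset_right)
    _ = Ω := Set.preimage_image_eq _ (mul_left_injective l)

theorem indicator_one_sub_indicator_not_ae_eq_zero {α 𝕜 : Type*} [MeasurableSpace α] [RCLike 𝕜]
    {ν : Measure α} {A B : Set α} (hAB : Disjoint A B) (hνA : ν A ≠ 0) :
    ¬ (A.indicator 1 - B.indicator 1 : α → 𝕜) =ᵐ[ν] 0 := by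
  intro h
  refine hνA (measure_mono_null (fun x hxA => ?_) (ae_iff.1 h))
  simp [Set.indicator_of_mem hxA, Set.indicator_of_notMem (Set.disjoint_left.1 hAB hxA)]

theorem integral_norm_sq_pos {α E : Type*} [MeasurableSpace α] [NormedAddCommGroup E]
    {ν : Measure α} {f : α → E} (hf : MemLp f 2 ν) (hf0 : ¬ f =ᵐ[ν] 0) :
    0 < ∫ x, ‖f x‖ ^ 2 ∂ν := by
  have hint := (memLp_two_iff_integrable_sq_norm hf.aestronglyMeasurable).1 hf
  refine (integral_nonneg fun x => by positivity).lt_of_ne fun h => hf0 ?_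
  filter_upwards [(integral_eq_zero_iff_of_nonneg (fun x => by positivity) hint).1 h.symm]
    with x hx
  simpa using hx

section RightTranslate

variable {G : Type*} [Group G] [MeasurableSpace G] [MeasurableMul G] {μ : Measure G}
  [μ.IsMulRightInvariant] {l : G}

theorem integrableOn_preimage_mul_right_of_periodic {E : Type*} [NormedAddCommGroup E]
    {f : G → E} (hf : ∀ x, f (x * l) = f x) {A : Set G} (hA : IntegrableOn f A μ) :
    IntegrableOn f ((· * l) ⁻¹' A) μ := by
  have h := (measurePreserving_mul_right μ l).integrableOn_comp_preimage
    (MeasurableEquiv.mulRight l).measurableEmbedding (f := f) (s := A)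
  rw [show f ∘ (· * l) = f from funext hf] at h
  exact h.2 hA

theorem setIntegral_preimage_mul_right_of_periodic {E : Type*} [NormedAddCommGroup E]
    [NormedSpace ℝ E] {f : G → E} (hf : ∀ x, f (x * l) = f x) (A : Set G) :
    ∫ x in (· * l) ⁻¹' A, f x ∂μ = ∫ x in A, f x ∂μ := by
  simpa only [hf] using (measurePreserving_mul_right μ l).setIntegral_preimage_emb
    (MeasurableEquiv.mulRight l).measurableEmbedding f A

variable {𝕜 : Type*} [RCLike 𝕜] {A : Set G}

theorem memLp_indicator_one_sub_indicator_preimage_mul_right (p : ENNReal)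
    (hA : MeasurableSet A) (hμA : μ A ≠ ⊤) :
    MemLp (A.indicator 1 - ((· * l) ⁻¹' A).indicator 1 : G → 𝕜) p μ := by
  have hμA' : μ ((· * l) ⁻¹' A) ≠ ⊤ := by
    rwa [measure_preimage_mul_right]
  exact (memLp_indicator_const p hA 1 (Or.inr hμA)).sub
    (memLp_indicator_const p (hA.preimage (measurable_mul_const l)) 1 (Or.inr hμA'))

theorem setIntegral_indicator_one_sub_indicator_preimage_mul_right_mul_eq_zero
    {Ω : Set G} (hA : MeasurableSet A) (hAΩ : A ⊆ Ω)
    (hA'Ω : (· * l) ⁻¹' A ⊆ Ω) {χ : G → 𝕜} (hχ : IntegrableOn χ A μ)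
    (hper : ∀ x, χ (x * l) = χ x) :
    ∫ x in Ω, (A.indicator 1 - ((· * l) ⁻¹' A).indicator 1 : G → 𝕜) x * χ x ∂μ = 0 := by
  have hA' : MeasurableSet ((· * l) ⁻¹' A) := hA.preimage (measurable_mul_const l)
  have hind : ∀ (B : Set G) x, B.indicator (1 : G → 𝕜) x * χ x = B.indicator χ x := by
    intro B x
    by_cases hx : x ∈ B <;> simp [hx]
  simp only [Pi.sub_apply, sub_mul, hind]
  rw [integral_sub ((hχ.integrable_indicator hA).restrict)
      (((integrableOn_preimage_mul_right_of_periodic hper hχ).integrable_indicator hA').restrict),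
    setIntegral_indicator hA, setIntegral_indicator hA', Set.inter_eq_self_of_subset_right hAΩ,
    Set.inter_eq_self_of_subset_right hA'Ω, setIntegral_preimage_mul_right_of_periodic hper,
    sub_self]

end RightTranslate

theorem dualLattice_apply_mul_of_mem {G : Type*} [CommGroup G] [TopologicalSpace G]
    [IsTopologicalGroup G] {Λ : Subgroup G} (k : dualLattice G Λ) (x : G) {l : G}
    (hl : l ∈ Λ) : (k : PontryaginDual G) (x * l) = (k : PontryaginDual G) x := by
  rw [map_mul, k.2 l hl, mul_one]

theorem integrableOn_conj_pontryaginDual {G : Type*} [Monoid G] [TopologicalSpace G]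
    [MeasurableSpace G] [OpensMeasurableSpace G] (μ : Measure G) (χ : PontryaginDual G)
    {A : Set G} (hA : μ A ≠ ⊤) :
    IntegrableOn (fun g => conj ((χ g : Circle) : ℂ)) A μ :=
  Measure.integrableOn_of_bounded (M := 1) hA
    (Complex.continuous_conj.comp (continuous_subtype_val.comp χ.continuous)).aestronglyMeasurable
    (Eventually.of_forall fun g => by simp [Circle.norm_coe])

theorem not_subtiling_exponentials_not_frame_general
    {G : Type*} [CommGroup G] [TopologicalSpace G] [IsTopologicalGroup G]
    [T2Space G] [SecondCountableTopology G]
    [MeasurableSpace G] [BorelSpace G]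
    (μ : Measure G) [μ.IsHaarMeasure]
    (Λ : Subgroup G)
    (Ω : Set G) (hΩmeas : MeasurableSet Ω) (hΩfin : μ Ω < ⊤)
    (hnotsub : ¬ ∀ l ∈ Λ, l ≠ 1 → μ (Ω ∩ ((· * l) '' Ω)) = 0) :
    (∃ f : G → ℂ, MemLp f 2 (μ.restrict Ω) ∧ ¬ f =ᵐ[μ.restrict Ω] 0 ∧
        ∀ k : dualLattice G Λ,
          ∫ g in Ω, f g * conj (((k : PontryaginDual G) g : ℂ)) ∂μ = 0) ∧
      ¬ ∃ A B : ℝ, 0 < A ∧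
        ∀ f : G → ℂ, MemLp f 2 (μ.restrict Ω) →
          A * ∫ g in Ω, ‖f g‖ ^ 2 ∂μ ≤
              (∑' k : dualLattice G Λ,
                ‖∫ g in Ω, f g * conj (((k : PontryaginDual G) g : ℂ)) ∂μ‖ ^ 2) ∧
            (∑' k : dualLattice G Λ,
                ‖∫ g in Ω, f g * conj (((k : PontryaginDual G) g : ℂ)) ∂μ‖ ^ 2) ≤
              B * ∫ g in Ω, ‖f g‖ ^ 2 ∂μ := by
  push Not at hnotsub
  obtain ⟨l, hlΛ, hl1, hoverlap⟩ := hnotsub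
  obtain ⟨Ω₁, hΩ₁Ω, hΩ₁, hμΩ₁, hdisj, hΩ₂Ω⟩ :=
    exists_subset_disjoint_preimage_mul_right_of_overlap μ hΩmeas hl1 hoverlap
  have hμΩ₁fin : μ Ω₁ ≠ ⊤ := ((measure_mono hΩ₁Ω).trans_lt hΩfin).ne
  set f : G → ℂ := Ω₁.indicator 1 - ((· * l) ⁻¹' Ω₁).indicator 1
  have hf : MemLp f 2 (μ.restrict Ω) :=
    (memLp_indicator_one_sub_indicator_preimage_mul_right 2 hΩ₁ hμΩ₁fin).restrict Ω
  have hf0 : ¬ f =ᵐ[μ.restrict Ω] 0 := indicator_one_sub_indicator_not_ae_eq_zero hdisj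
    (by rwa [Measure.restrict_apply hΩ₁, Set.inter_eq_self_of_subset_left hΩ₁Ω])
  have horth : ∀ k : dualLattice G Λ,
      ∫ g in Ω, f g * conj (((k : PontryaginDual G) g : ℂ)) ∂μ = 0 := fun k =>
    setIntegral_indicator_one_sub_indicator_preimage_mul_right_mul_eq_zero hΩ₁ hΩ₁Ω hΩ₂Ω
      (integrableOn_conj_pontryaginDual μ k hμΩ₁fin)
      (fun x => by rw [dualLattice_apply_mul_of_mem k x hlΛ])
  refine ⟨⟨f, hf, hf0, horth⟩, ?_⟩
  rintro ⟨A, B, hA, hAB⟩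
  have hlower := (hAB f hf).1
  simp only [horth, norm_zero, ne_eq, OfNat.ofNat_ne_zero, not_false_eq_true, zero_pow,
    tsum_zero] at hlower
  nlinarith [integral_norm_sq_pos hf hf0]

/-- If `Ω` (finite positive measure) is not a sub-tiling set for the
lattice `Λ`, then there is a nonzero `f ∈ L²(Ω)` orthogonal to every exponential
`e_{λ̃}`, `λ̃ ∈ Λ⊥`; consequently `{e_{λ̃} : λ̃ ∈ Λ⊥}` is not a frame for `L²(Ω)`. -/
theorem not_subtiling_exponentials_not_frame
    {G : Type*} [CommGroup G] [TopologicalSpace G] [IsTopologicalGroup G]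
    [T2Space G] [LocallyCompactSpace G] [SecondCountableTopology G]
    [MeasurableSpace G] [BorelSpace G]
    (μ : Measure G) [μ.IsHaarMeasure]
    (Λ : Subgroup G) [DiscreteTopology Λ] [CompactSpace (G ⧸ Λ)] [Countable Λ]
    (Ω : Set G) (hΩmeas : MeasurableSet Ω) (hΩpos : 0 < μ Ω) (hΩfin : μ Ω < ⊤)
    (hnotsub : ¬ ∀ l ∈ Λ, l ≠ 1 → μ (Ω ∩ ((· * l) '' Ω)) = 0) :
    (∃ f : G → ℂ, MemLp f 2 (μ.restrict Ω) ∧ ¬ f =ᵐ[μ.restrict Ω] 0 ∧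
        ∀ k : dualLattice G Λ,
          ∫ g in Ω, f g * conj (((k : PontryaginDual G) g : ℂ)) ∂μ = 0) ∧
      ¬ ∃ A B : ℝ, 0 < A ∧
        ∀ f : G → ℂ, MemLp f 2 (μ.restrict Ω) →
          A * ∫ g in Ω, ‖f g‖ ^ 2 ∂μ ≤
              (∑' k : dualLattice G Λ,
                ‖∫ g in Ω, f g * conj (((k : PontryaginDual G) g : ℂ)) ∂μ‖ ^ 2) ∧
            (∑' k : dualLattice G Λ,
                ‖∫ g in Ω, f g * conj (((k : PontryaginDual G) g : ℂ)) ∂μ‖ ^ 2) ≤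
              B * ∫ g in Ω, ‖f g‖ ^ 2 ∂μ :=
  not_subtiling_exponentials_not_frame_general μ Λ Ω hΩmeas hΩfin hnotsub
end
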